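/- arXiv:2112.00310 — 2 statements merged into one kernel-verified Lean document; each statement's English description precedes it below -/
import Mathlib

section
/- The functor T from R-modules to R ⋉ M-modules, defined on objects by T(N) = (N ⊕ M ⊗_R N, (0 0; 1 0)) and on morphisms f by f ⊕ (id_M ⊗ f), is left adjoint to the forgetful functor U which sends an R ⋉ M-module (X, α) to the underlying R-module X. -/
open MulOpposite

/-- `(MN, t)` is the tensor product `M ⊗_R N` of the `R`-bimodule `M` and the left
`R`-module `N`: `t` is bi-additive, `R`-balanced, left-`R`-linear, and universal
among bi-additive `R`-balanced maps out of `M × N`. -/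
def IsTensorProd (R : Type) [Ring R] (M : Type) [AddCommGroup M] [Module R M]
    [Module Rᵐᵒᵖ M] (N : Type) [AddCommGroup N] [Module R N]
    (MN : Type) [AddCommGroup MN] [Module R MN] (t : M → N → MN) : Prop :=
  (∀ m m' n, t (m + m') n = t m n + t m' n) ∧
  (∀ m n n', t m (n + n') = t m n + t m n') ∧
  (∀ (r : R) (m : M) (n : N), t (op r • m) n = t m (r • n)) ∧
  (∀ (r : R) (m : M) (n : N), t (r • m) n = r • t m n) ∧
  (∀ (P : Type) [AddCommGroup P] (g : M → N → P),
    (∀ m m' n, g (m + m') n = g m n + g m' n) →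
    (∀ m n n', g m (n + n') = g m n + g m n') →
    (∀ (r : R) m n, g (op r • m) n = g m (r • n)) →
    ∃! h : MN →+ P, ∀ m n, h (t m n) = g m n)

open TrivSqZeroExt CategoryTheory

/-!
An `R ⋉ M`-module is an `R`-module `X` with a map `α : M ⊗_R X → X` such that
`α ∘ (id ⊗ α) = 0`, and `T(N) = N ⊕ M ⊗_R N` is the free such pair on `N`: an `R`-linear
`f : N → X` extends to `T(N)` by `(n, q) ↦ f n + α((id ⊗ f) q)`, and the relation
`α ∘ (id ⊗ α) = 0` is exactly what makes this extension `R ⋉ M`-linear. Accordingly the unit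
is `n ↦ (n, 0)` and the counit is `(x, q) ↦ x + α q`.
-/

open scoped TensorProduct

namespace IsTensorProd

variable {R M N P Q : Type} [Ring R] [AddCommGroup M] [Module R M] [Module Rᵐᵒᵖ M]
  [AddCommGroup N] [Module R N] [AddCommGroup P] [Module R P] {t : M → N → P}

theorem add_left (h : IsTensorProd R M N P t) (m m' : M) (n : N) :
    t (m + m') n = t m n + t m' n := h.1 m m' n

theorem add_right (h : IsTensorProd R M N P t) (m : M) (n n' : N) :
    t m (n + n') = t m n + t m n' := h.2.1 m n n'

theorem balanced (h : IsTensorProd R M N P t) (r : R) (m : M) (n : N) :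
    t (op r • m) n = t m (r • n) := h.2.2.1 r m n

theorem smul_left (h : IsTensorProd R M N P t) (r : R) (m : M) (n : N) :
    t (r • m) n = r • t m n := h.2.2.2.1 r m n

theorem addHom_ext (h : IsTensorProd R M N P t) [AddCommGroup Q] {f g : P →+ Q}
    (hfg : ∀ m n, f (t m n) = g (t m n)) : f = g :=
  (h.2.2.2.2 Q (fun m n => f (t m n)) (by simp [h.add_left]) (by simp [h.add_right])
    (by simp [h.balanced])).unique (fun _ _ => rfl) fun m n => (hfg m n).symm

theorem linearMap_ext (h : IsTensorProd R M N P t) [AddCommGroup Q] [Module R Q]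
    {f g : P →ₗ[R] Q} (hfg : ∀ m n, f (t m n) = g (t m n)) : f = g :=
  LinearMap.toAddMonoidHom_injective (h.addHom_ext hfg)

variable [AddCommGroup Q] [Module R Q] {g : M → N → Q}

noncomputable def lift (h : IsTensorProd R M N P t) (g : M → N → Q)
    (add_left : ∀ m m' n, g (m + m') n = g m n + g m' n)
    (add_right : ∀ m n n', g m (n + n') = g m n + g m n')
    (balanced : ∀ (r : R) m n, g (op r • m) n = g m (r • n))
    (smul_left : ∀ (r : R) m n, g (r • m) n = r • g m n) : P →ₗ[R] Q :=
  have hg := h.2.2.2.2 Q g add_left add_right balanced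
  { toFun := hg.choose
    map_add' := map_add _
    -- both sides of `R`-linearity are additive lifts of `r • g`
    map_smul' := fun r => DFunLike.congr_fun <| h.addHom_ext
      (f := hg.choose.comp (DistribSMul.toAddMonoidHom P r))
      (g := (DistribSMul.toAddMonoidHom Q r).comp hg.choose)
      fun m n => by simp [← h.smul_left, hg.choose_spec.1, smul_left] }

theorem lift_apply (h : IsTensorProd R M N P t) (add_left add_right balanced smul_left)
    (m : M) (n : N) : h.lift g add_left add_right balanced smul_left (t m n) = g m n :=
  (h.2.2.2.2 Q g add_left add_right balanced).choose_spec.1 m n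

noncomputable def linearEquiv (h : IsTensorProd R M N P t) {s : M → N → Q}
    (h' : IsTensorProd R M N Q s) : P ≃ₗ[R] Q :=
  .ofLinearMap (h.lift s h'.add_left h'.add_right h'.balanced h'.smul_left)
    (h'.lift t h.add_left h.add_right h.balanced h.smul_left)
    (h'.linearMap_ext fun m n => by simp [lift_apply])
    (h.linearMap_ext fun m n => by simp [lift_apply])

theorem linearEquiv_apply (h : IsTensorProd R M N P t) {s : M → N → Q}
    (h' : IsTensorProd R M N Q s) (m : M) (n : N) : h.linearEquiv h' (t m n) = s m n :=
  h.lift_apply h'.add_left h'.add_right h'.balanced h'.smul_left m n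

end IsTensorProd

section BalancedTensor

variable (R M N : Type) [Ring R] [AddCommGroup M] [Module R M] [Module Rᵐᵒᵖ M]
  [SMulCommClass R Rᵐᵒᵖ M] [AddCommGroup N] [Module R N]

def balancedRel : Submodule R (M ⊗[ℤ] N) where
  carrier := AddSubgroup.closure
    {x | ∃ (r : R) (m : M) (n : N), (op r • m) ⊗ₜ[ℤ] n - m ⊗ₜ[ℤ] (r • n) = x}
  add_mem' := add_mem
  zero_mem' := zero_mem _
  smul_mem' c x hx := by
    refine (AddSubgroup.closure_le
      ((AddSubgroup.closure _).comap (DistribSMul.toAddMonoidHom _ c))).mpr ?_ hx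
    rintro _ ⟨r, m, n, rfl⟩
    refine AddSubgroup.subset_closure ⟨r, c • m, n, ?_⟩
    rw [DistribSMul.toAddMonoidHom_apply, smul_sub, TensorProduct.smul_tmul',
      TensorProduct.smul_tmul', smul_comm c (op r) m]

/-- `M ⊗_R N` for a noncommutative `R` (Mathlib's `⊗[R]` needs `R` commutative). -/
abbrev BalancedTensor : Type := (M ⊗[ℤ] N) ⧸ balancedRel R M N

variable {M N}

def BalancedTensor.tmul (m : M) (n : N) : BalancedTensor R M N :=
  Submodule.Quotient.mk (m ⊗ₜ[ℤ] n)

end BalancedTensor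

namespace BalancedTensor

variable {R M : Type} [Ring R] [AddCommGroup M] [Module R M] [Module Rᵐᵒᵖ M]
  [SMulCommClass R Rᵐᵒᵖ M] {N N' N'' : Type} [AddCommGroup N] [Module R N]
  [AddCommGroup N'] [Module R N'] [AddCommGroup N''] [Module R N'']

@[simp]
theorem add_tmul (m m' : M) (n : N) : tmul R (m + m') n = tmul R m n + tmul R m' n := by
  simp [tmul, TensorProduct.add_tmul]

@[simp]
theorem tmul_add (m : M) (n n' : N) : tmul R m (n + n') = tmul R m n + tmul R m n' := by
  simp [tmul, TensorProduct.tmul_add]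

@[simp]
theorem zero_tmul (n : N) : tmul R (0 : M) n = 0 := by
  simp [tmul]

@[simp]
theorem tmul_zero (m : M) : tmul R m (0 : N) = 0 := by
  simp [tmul]

@[simp]
theorem smul_tmul' (r : R) (m : M) (n : N) : tmul R (r • m) n = r • tmul R m n := rfl

@[simp]
theorem op_smul_tmul (r : R) (m : M) (n : N) : tmul R (op r • m) n = tmul R m (r • n) :=
  (Submodule.Quotient.eq _).mpr (AddSubgroup.subset_closure ⟨r, m, n, rfl⟩)

def liftAddHom {P : Type} [AddCommGroup P] (g : M → N → P)
    (add_left : ∀ m m' n, g (m + m') n = g m n + g m' n)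
    (add_right : ∀ m n n', g m (n + n') = g m n + g m n')
    (balanced : ∀ (r : R) m n, g (op r • m) n = g m (r • n)) : BalancedTensor R M N →+ P :=
  QuotientAddGroup.lift _
    (TensorProduct.liftAddHom (.mk' (fun m => .mk' (g m) (add_right m))
      fun m m' => AddMonoidHom.ext (add_left m m')) fun z m n => by simp [map_zsmul])
    ((AddSubgroup.closure_le _).mpr <| by
      rintro _ ⟨r, m, n, rfl⟩
      simp [balanced])

theorem isTensorProd : IsTensorProd R M N (BalancedTensor R M N) (tmul R) := by
  refine ⟨add_tmul, tmul_add, op_smul_tmul, smul_tmul', fun P _ g add_left add_right balanced =>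
    ⟨liftAddHom g add_left add_right balanced, fun m n => rfl, fun f hf => ?_⟩⟩
  ext x
  obtain ⟨x, rfl⟩ := Submodule.Quotient.mk_surjective _ x
  induction x using TensorProduct.induction_on with
  | zero => simp
  | tmul m n => exact hf m n
  | add x y hx hy => simp only [Submodule.Quotient.mk_add, map_add, hx, hy]

noncomputable def map (f : N →ₗ[R] N') : BalancedTensor R M N →ₗ[R] BalancedTensor R M N' :=
  isTensorProd.lift (fun m n => tmul R m (f n)) (by simp) (by simp) (by simp) (by simp)

@[simp]
theorem map_tmul (f : N →ₗ[R] N') (m : M) (n : N) : map f (tmul R m n) = tmul R m (f n) :=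
  isTensorProd.lift_apply ..

@[simp]
theorem map_id : map (M := M) (LinearMap.id : N →ₗ[R] N) = LinearMap.id :=
  isTensorProd.linearMap_ext fun _ _ => by simp

theorem map_comp (f : N →ₗ[R] N') (g : N' →ₗ[R] N'') :
    map (M := M) (g ∘ₗ f) = map g ∘ₗ map f :=
  isTensorProd.linearMap_ext fun _ _ => by simp

end BalancedTensor

open BalancedTensor

/-- `N ⊕ M ⊗_R N`, on which `(r, m) : R ⋉ M` acts by the matrix `(r 0; m r)`. -/
abbrev InducedModule (R M N : Type) [Ring R] [AddCommGroup M] [Module R M] [Module Rᵐᵒᵖ M]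
    [SMulCommClass R Rᵐᵒᵖ M] [AddCommGroup N] [Module R N] : Type :=
  N × BalancedTensor R M N

namespace InducedModule

variable {R M : Type} [Ring R] [AddCommGroup M] [Module R M] [Module Rᵐᵒᵖ M]
  [SMulCommClass R Rᵐᵒᵖ M] {N N' : Type} [AddCommGroup N] [Module R N]
  [AddCommGroup N'] [Module R N']

instance : SMul (TrivSqZeroExt R M) (InducedModule R M N) :=
  ⟨fun a x => (a.fst • x.1, a.fst • x.2 + tmul R a.snd x.1)⟩

theorem smul_def (a : TrivSqZeroExt R M) (x : InducedModule R M N) :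
    a • x = (a.fst • x.1, a.fst • x.2 + tmul R a.snd x.1) := rfl

instance : Module (TrivSqZeroExt R M) (InducedModule R M N) where
  one_smul x := by simp [smul_def]
  mul_smul a b x := by simp [smul_def, mul_smul, add_assoc]
  smul_zero a := by simp [smul_def]
  smul_add a x y := by simp [smul_def, add_add_add_comm]
  add_smul a b x := by simp [smul_def, add_smul, add_add_add_comm]
  zero_smul x := by simp [smul_def]

noncomputable def map (f : N →ₗ[R] N') :
    InducedModule R M N →ₗ[TrivSqZeroExt R M] InducedModule R M N' where
  toFun x := (f x.1, BalancedTensor.map f x.2)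
  map_add' x y := by simp
  map_smul' a x := by simp [smul_def]

end InducedModule

noncomputable def inductionFunctor (R M : Type) [Ring R] [AddCommGroup M] [Module R M]
    [Module Rᵐᵒᵖ M] [SMulCommClass R Rᵐᵒᵖ M] :
    ModuleCat.{0} R ⥤ ModuleCat.{0} (TrivSqZeroExt R M) where
  obj N := .of _ (InducedModule R M N)
  map f := ModuleCat.ofHom (InducedModule.map f.hom)
  map_id N := by ext x <;> simp [InducedModule.map]
  map_comp f g := by ext x <;> simp [InducedModule.map, BalancedTensor.map_comp]

section Adjunction

variable {R M : Type} [Ring R] [AddCommGroup M] [Module R M] [Module Rᵐᵒᵖ M]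
  [SMulCommClass R Rᵐᵒᵖ M]

/-- The structure map `α : M ⊗_R X → X` of an `R ⋉ M`-module `X`. -/
noncomputable def actionMap (X : ModuleCat.{0} (TrivSqZeroExt R M)) :
    BalancedTensor R M ((ModuleCat.restrictScalars (inlHom R M)).obj X) →ₗ[R]
      (ModuleCat.restrictScalars (inlHom R M)).obj X :=
  isTensorProd.lift (fun m x => (inr m : TrivSqZeroExt R M) • x) (by simp [add_smul])
    (by simp) (fun r m x => by rw [← inr_mul_inl, mul_smul]; rfl)
    (fun r m x => by rw [← inl_mul_inr, mul_smul]; rfl)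

@[simp]
theorem actionMap_tmul (X : ModuleCat.{0} (TrivSqZeroExt R M)) (m : M)
    (x : (ModuleCat.restrictScalars (inlHom R M)).obj X) :
    actionMap X (tmul R m x) = (inr m : TrivSqZeroExt R M) • x :=
  isTensorProd.lift_apply ..

theorem inr_smul_actionMap (X : ModuleCat.{0} (TrivSqZeroExt R M)) (m : M)
    (q : BalancedTensor R M ((ModuleCat.restrictScalars (inlHom R M)).obj X)) :
    (inr m : TrivSqZeroExt R M) • actionMap X q = 0 :=
  DFunLike.congr_fun (isTensorProd.addHom_ext
    (f := (DistribSMul.toAddMonoidHom _ (inr m : TrivSqZeroExt R M)).comp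
      (actionMap X).toAddMonoidHom) (g := 0)
    fun m' x => by simp [← mul_smul, inr_mul_inr]) q

theorem actionMap_naturality {X Y : ModuleCat.{0} (TrivSqZeroExt R M)} (h : X ⟶ Y) :
    ((ModuleCat.restrictScalars (inlHom R M)).map h).hom ∘ₗ actionMap X =
      actionMap Y ∘ₗ BalancedTensor.map ((ModuleCat.restrictScalars (inlHom R M)).map h).hom :=
  isTensorProd.linearMap_ext fun m x => by
    rw [LinearMap.comp_apply, LinearMap.comp_apply, map_tmul, actionMap_tmul, actionMap_tmul]
    exact h.hom.map_smul _ x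

def InducedModule.restrictScalarsEquiv (N : ModuleCat.{0} R) :
    (ModuleCat.restrictScalars (inlHom R M)).obj ((inductionFunctor R M).obj N) ≃ₗ[R]
      InducedModule R M N where
  toFun x := x
  invFun x := x
  map_add' _ _ := rfl
  map_smul' r x := Prod.ext rfl (show r • x.2 + tmul R (0 : M) x.1 = r • x.2 by simp)
  left_inv _ := rfl
  right_inv _ := rfl

noncomputable def inductionUnit (N : ModuleCat.{0} R) :
    N →ₗ[R] (ModuleCat.restrictScalars (inlHom R M)).obj ((inductionFunctor R M).obj N) :=
  (InducedModule.restrictScalarsEquiv N).symm.toLinearMap ∘ₗ LinearMap.inl R N _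

noncomputable def inductionCounit (X : ModuleCat.{0} (TrivSqZeroExt R M)) :
    (inductionFunctor R M).obj ((ModuleCat.restrictScalars (inlHom R M)).obj X)
      →ₗ[TrivSqZeroExt R M] X where
  toFun x := x.1 + actionMap X x.2
  map_add' x y := by
    change (x.1 + y.1) + actionMap X (x.2 + y.2) =
      (x.1 + actionMap X x.2) + (y.1 + actionMap X y.2)
    rw [map_add, add_add_add_comm]
  map_smul' a x := by
    change a.fst • x.1 + actionMap X (a.fst • x.2 + tmul R a.snd x.1) =
      a • (x.1 + actionMap X x.2)
    rw [map_add, map_smul, actionMap_tmul]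
    conv_rhs => rw [← inl_fst_add_inr_snd_eq a, add_smul, smul_add, smul_add, inr_smul_actionMap]
    change (inl a.fst : TrivSqZeroExt R M) • x.1 +
      ((inl a.fst : TrivSqZeroExt R M) • actionMap X x.2 + inr a.snd • x.1) = _
    abel

theorem actionMap_map_inductionUnit (N : ModuleCat.{0} R) (q : BalancedTensor R M N) :
    actionMap _ (BalancedTensor.map (inductionUnit N) q) = ((0, q) : InducedModule R M N) :=
  DFunLike.congr_fun (isTensorProd.addHom_ext
    (f := (actionMap _ ∘ₗ BalancedTensor.map (inductionUnit (M := M) N)).toAddMonoidHom)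
    (g := (LinearMap.inr R N (BalancedTensor R M N)).toAddMonoidHom) fun m n => by
      simp only [LinearMap.toAddMonoidHom_coe, LinearMap.comp_apply, map_tmul, actionMap_tmul]
      change (inr m : TrivSqZeroExt R M) • ((n, 0) : InducedModule R M N) = (0, tmul R m n)
      simp [InducedModule.smul_def]) q

theorem inductionCounit_naturality {X Y : ModuleCat.{0} (TrivSqZeroExt R M)} (h : X ⟶ Y) :
    h.hom ∘ₗ inductionCounit X =
      inductionCounit Y ∘ₗ
        InducedModule.map ((ModuleCat.restrictScalars (inlHom R M)).map h).hom :=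
  LinearMap.ext fun x => by
    let hU := ((ModuleCat.restrictScalars (inlHom R M)).map h).hom
    change hU (x.1 + actionMap X x.2) = hU x.1 + actionMap Y (BalancedTensor.map hU x.2)
    rw [map_add, ← LinearMap.comp_apply (actionMap Y), ← actionMap_naturality]
    rfl

end Adjunction

noncomputable def inductionAdjunction (R M : Type) [Ring R] [AddCommGroup M] [Module R M]
    [Module Rᵐᵒᵖ M] [SMulCommClass R Rᵐᵒᵖ M] :
    inductionFunctor R M ⊣ ModuleCat.restrictScalars (inlHom R M) where
  unit :=
    { app N := ConcreteCategory.ofHom (C := ModuleCat R) (inductionUnit N)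
      naturality N N' f := by
        ext n
        exact Prod.ext rfl (map_zero _).symm }
  counit :=
    { app X := ConcreteCategory.ofHom (C := ModuleCat (TrivSqZeroExt R M)) (inductionCounit X)
      naturality X Y h := ModuleCat.hom_ext (inductionCounit_naturality h).symm }
  left_triangle_components N := by
    ext x
    change ((x.1, 0) : InducedModule R M N) +
      (show InducedModule R M N from actionMap _ (BalancedTensor.map (inductionUnit N) x.2)) = x
    rw [actionMap_map_inductionUnit]
    exact Prod.ext (add_zero _) (zero_add _)
  right_triangle_components X := by
    ext x
    change x + actionMap X 0 = x
    rw [map_zero, add_zero]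

/-- The functor `T : R-Mod → (R ⋉ M)-Mod`, defined on objects by
`T(N) = (N ⊕ M ⊗_R N, (0 0; 1 0))` and on morphisms by `f ⊕ (id_M ⊗ f)`, is left
adjoint to the forgetful functor `U` sending an `R ⋉ M`-module `(X, α)` to the
underlying `R`-module `X` (restriction of scalars along `r ↦ (r, 0)`). -/
theorem T_left_adjoint_to_U (R M : Type) [Ring R] [AddCommGroup M] [Module R M]
    [Module Rᵐᵒᵖ M] [SMulCommClass R Rᵐᵒᵖ M] :
    ∃ T : ModuleCat.{0} R ⥤ ModuleCat.{0} (TrivSqZeroExt R M),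
      Nonempty (T ⊣ ModuleCat.restrictScalars (inlHom R M)) ∧
      ∀ (N : ModuleCat.{0} R) (MN : Type) [AddCommGroup MN] [Module R MN]
        (t : M → N → MN), IsTensorProd R M N MN t →
        ∃ e : ((ModuleCat.restrictScalars (inlHom R M)).obj (T.obj N)) ≃ₗ[R] (N × MN),
          ∀ (m : M) (x : (T.obj N : Type)),
            e ((inr m : TrivSqZeroExt R M) • x) = (0, t m (e x).1) := by
  refine ⟨inductionFunctor R M, ⟨inductionAdjunction R M⟩, fun N MN _ _ t ht => ?_⟩
  let φ := isTensorProd.linearEquiv ht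
  refine ⟨InducedModule.restrictScalarsEquiv N ≪≫ₗ (LinearEquiv.refl R N).prodCongr φ,
    fun m x => ?_⟩
  change ((0 : R) • x.1, φ ((0 : R) • x.2 + tmul R m x.1)) = (0, t m x.1)
  simp [φ, IsTensorProd.linearEquiv_apply]
end

section
/- Let A be a finite dimensional algebra, M a finite dimensional A-bimodule, Λ = A ⋉ M. If Q → P → X → 0 is a minimal projective presentation of a finite dimensional A-module X (i.e., both Q → ker(P → X) and P → X are projective covers), then T(Q) → T(P) → T(X) → 0 is a minimal projective presentation of the Λ-module T(X). -/
open MulOpposite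

open TrivSqZeroExt Function LinearMap

/-!
`T(N) = N ⊕ M ⊗_A N` is `Λ ⊗_A N`, so `T` is right exact (because `M ⊗_A -` is) and sends
projectives to projectives: a splitting `N → A^(N)` of the free cover induces a splitting
`T(N) → Λ^(N)`. For minimality, a `Λ`-submodule `S ≤ T(N)` whose projection to `N` is onto is
all of `T(N)`, because `M • S` already contains every `(0, m ⊗ n)`. If `S ⊔ ker T(g) = ⊤`, then
the projection of `S` together with `ker g` spans `N`, so by minimality of `g` it is onto.
-/

def Submodule.IsSuperfluous {R N : Type} [Semiring R] [AddCommMonoid N] [Module R N]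
    (K : Submodule R N) : Prop :=
  ∀ S : Submodule R N, S ⊔ K = ⊤ → S = ⊤

/-- `N × MN` is the `A ⋉ M`-module `T(N) = (N ⊕ M ⊗_A N, (0 0; 1 0))`. -/
def IsTrivSqZeroExtModule (A M : Type) [Ring A] [AddCommGroup M] [Module A M] [Module Aᵐᵒᵖ M]
    [SMulCommClass A Aᵐᵒᵖ M] {N MN : Type} [AddCommGroup N] [Module A N] [AddCommGroup MN]
    [Module A MN] (t : M → N → MN) [Module (TrivSqZeroExt A M) (N × MN)] : Prop :=
  ∀ (q : TrivSqZeroExt A M) (x : N × MN), q • x = (q.fst • x.1, q.fst • x.2 + t q.snd x.1)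

theorem LinearMap.range_eq_ker_of_eq_prodMap {R U₁ U₂ V₁ V₂ W₁ W₂ : Type} [Semiring R]
    [AddCommMonoid U₁] [AddCommMonoid U₂] [AddCommMonoid V₁] [AddCommMonoid V₂]
    [AddCommMonoid W₁] [AddCommMonoid W₂]
    [Module R (U₁ × U₂)] [Module R (V₁ × V₂)] [Module R (W₁ × W₂)]
    {Tf : (U₁ × U₂) →ₗ[R] (V₁ × V₂)} {Tp : (V₁ × V₂) →ₗ[R] (W₁ × W₂)}
    {f₁ : U₁ → V₁} {f₂ : U₂ → V₂} {p₁ : V₁ → W₁} {p₂ : V₂ → W₂}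
    (hTf : ⇑Tf = Prod.map f₁ f₂) (hTp : ⇑Tp = Prod.map p₁ p₂)
    (h₁ : ∀ y, y ∈ Set.range f₁ ↔ p₁ y = 0) (h₂ : ∀ y, y ∈ Set.range f₂ ↔ p₂ y = 0) :
    range Tf = ker Tp := by
  ext ⟨y₁, y₂⟩
  rw [LinearMap.mem_range, LinearMap.mem_ker, hTp, Prod.map_apply, Prod.mk_eq_zero, ← h₁, ← h₂,
    ← Set.mem_range, hTf, Set.range_prodMap, Set.mem_prod]

namespace IsTensorProd

section Basic

variable {A M : Type} [Ring A] [AddCommGroup M] [Module A M] [Module Aᵐᵒᵖ M]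
  {N MN : Type} [AddCommGroup N] [Module A N] [AddCommGroup MN] [Module A MN]
  {t : M → N → MN}

theorem addSubgroup_eq_top (ht : IsTensorProd A M N MN t) {S : AddSubgroup MN}
    (hS : ∀ m n, t m n ∈ S) : S = ⊤ := by
  obtain ⟨h, -, huniq⟩ := ht.2.2.2.2 (MN ⧸ S) (fun _ _ => 0) (by simp) (by simp) (by simp)
  have hmk : QuotientAddGroup.mk' S = h :=
    huniq _ fun m n => (QuotientAddGroup.eq_zero_iff _).mpr (hS m n)
  have hzero : (0 : MN →+ MN ⧸ S) = h := huniq _ fun _ _ => rfl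
  rw [eq_top_iff]
  intro u _
  rw [← QuotientAddGroup.eq_zero_iff, ← QuotientAddGroup.mk'_apply, hmk, ← hzero]
  rfl

theorem addHom_ext_s19 (ht : IsTensorProd A M N MN t) {V : Type} [AddCommGroup V]
    {h₁ h₂ : MN →+ V} (h : ∀ m n, h₁ (t m n) = h₂ (t m n)) : h₁ = h₂ := by
  have hker := ht.addSubgroup_eq_top (S := (h₁ - h₂).ker) fun m n => by
    simp [AddMonoidHom.mem_ker, h m n]
  ext u
  have hu : u ∈ (h₁ - h₂).ker := hker ▸ AddSubgroup.mem_top u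
  simpa [sub_eq_zero] using hu

theorem map_zero_right (ht : IsTensorProd A M N MN t) (m : M) : t m 0 = 0 := by
  simpa using ht.2.1 m 0 0

theorem map_zero_left (ht : IsTensorProd A M N MN t) (n : N) : t 0 n = 0 := by
  simpa using ht.1 0 0 n

theorem map_sub_right (ht : IsTensorProd A M N MN t) (m : M) (n n' : N) :
    t m (n - n') = t m n - t m n' := by
  rw [eq_sub_iff_add_eq, ← ht.2.1, sub_add_cancel]

end Basic

section RightExact

variable {A M : Type} [Ring A] [AddCommGroup M] [Module A M] [Module Aᵐᵒᵖ M]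
  {N₁ N₂ N₃ MN₁ MN₂ MN₃ : Type}
  [AddCommGroup N₁] [Module A N₁] [AddCommGroup MN₁]
  [AddCommGroup N₂] [Module A N₂] [AddCommGroup MN₂]
  [AddCommGroup N₃] [Module A N₃] [AddCommGroup MN₃] [Module A MN₃]
  {t₁ : M → N₁ → MN₁} {t₂ : M → N₂ → MN₂} {t₃ : M → N₃ → MN₃}

theorem map_surjective (ht₃ : IsTensorProd A M N₃ MN₃ t₃) {p : N₂ →ₗ[A] N₃}
    (hp : Surjective p) {Fp : MN₂ →+ MN₃} (hFp : ∀ m x, Fp (t₂ m x) = t₃ m (p x)) :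
    Surjective Fp := by
  rw [← AddMonoidHom.range_eq_top]
  refine ht₃.addSubgroup_eq_top fun m y => ?_
  obtain ⟨x, rfl⟩ := hp y
  exact ⟨t₂ m x, hFp m x⟩

theorem range_map_le_ker_map [Module A MN₁] (ht₁ : IsTensorProd A M N₁ MN₁ t₁)
    (ht₃ : IsTensorProd A M N₃ MN₃ t₃) {f : N₁ →ₗ[A] N₂} {p : N₂ →ₗ[A] N₃}
    (hpf : p ∘ₗ f = 0) {Ff : MN₁ →+ MN₂} (hFf : ∀ m x, Ff (t₁ m x) = t₂ m (f x))
    {Fp : MN₂ →+ MN₃} (hFp : ∀ m x, Fp (t₂ m x) = t₃ m (p x)) :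
    Ff.range ≤ Fp.ker := by
  have hcomp : Fp.comp Ff = 0 := ht₁.addHom_ext_s19 fun m x => by
    simp [hFf, hFp, ← LinearMap.comp_apply, hpf, ht₃.map_zero_right]
  rintro _ ⟨u, rfl⟩
  exact DFunLike.congr_fun hcomp u

/-- Right exactness of `M ⊗_A -`: the inverse of `MN₂ / range Ff → MN₃` is induced by
`t₃ m (p x) ↦ [t₂ m x]`, which is well defined because `range f = ker p`. -/
theorem ker_map_le_range_map [Module A MN₂] (ht₂ : IsTensorProd A M N₂ MN₂ t₂)
    (ht₃ : IsTensorProd A M N₃ MN₃ t₃) {f : N₁ →ₗ[A] N₂} {p : N₂ →ₗ[A] N₃}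
    (hp : Surjective p) (hexact : range f = ker p)
    {Ff : MN₁ →+ MN₂} (hFf : ∀ m x, Ff (t₁ m x) = t₂ m (f x))
    {Fp : MN₂ →+ MN₃} (hFp : ∀ m x, Fp (t₂ m x) = t₃ m (p x)) :
    Fp.ker ≤ Ff.range := by
  let mk := QuotientAddGroup.mk' Ff.range
  have hmk : ∀ m x x', p x = p x' → mk (t₂ m x) = mk (t₂ m x') := by
    intro m x x' hxx'
    obtain ⟨y, hy⟩ : x - x' ∈ range f := by
      rw [hexact, LinearMap.mem_ker, map_sub, hxx', sub_self]
    rw [QuotientAddGroup.mk'_apply, QuotientAddGroup.mk'_apply, QuotientAddGroup.eq_iff_sub_mem,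
      ← ht₂.map_sub_right, ← hy, ← hFf]
    exact ⟨_, rfl⟩
  let s := surjInv hp
  obtain ⟨h, hh, -⟩ := ht₃.2.2.2.2 _ (fun m y => mk (t₂ m (s y)))
    (fun m m' y => by rw [ht₂.1, map_add])
    (fun m y y' => by
      rw [← map_add, ← ht₂.2.1]
      exact hmk _ _ _ (by simp only [map_add, s, surjInv_eq]))
    (fun r m y => by
      rw [ht₂.2.2.1]
      exact hmk _ _ _ (by simp only [map_smul, s, surjInv_eq]))
  have hcomp : h.comp Fp = mk := ht₂.addHom_ext_s19 fun m x => by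
    simp only [AddMonoidHom.comp_apply, hFp, hh]
    exact hmk _ _ _ (surjInv_eq hp _)
  intro u hu
  rw [← QuotientAddGroup.eq_zero_iff, ← QuotientAddGroup.mk'_apply]
  change mk u = 0
  rw [← hcomp, AddMonoidHom.comp_apply, AddMonoidHom.mem_ker.mp hu, map_zero]

end RightExact

section TrivSqZeroExtModule

variable {A M : Type} [Ring A] [AddCommGroup M] [Module A M] [Module Aᵐᵒᵖ M]
  [SMulCommClass A Aᵐᵒᵖ M]
  {N MN : Type} [AddCommGroup N] [Module A N] [AddCommGroup MN] [Module A MN]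
  {t : M → N → MN}

local notation "Λ" => TrivSqZeroExt A M

theorem exists_addHom_extend (ht : IsTensorProd A M N MN t) {V : Type} [AddCommGroup V]
    [Module Λ V] (ψ : N →+ V) (hψ : ∀ (a : A) x, ψ (a • x) = (inl a : Λ) • ψ x) :
    ∃ h : MN →+ V, (∀ m x, h (t m x) = (inr m : Λ) • ψ x) ∧
      (∀ (a : A) u, h (a • u) = (inl a : Λ) • h u) ∧ ∀ (m : M) u, (inr m : Λ) • h u = 0 := by
  obtain ⟨h, hh, -⟩ := ht.2.2.2.2 V (fun m x => (inr m : Λ) • ψ x)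
    (fun m m' x => by rw [inr_add, add_smul])
    (fun m x x' => by rw [map_add, smul_add])
    (fun r m x => by rw [hψ, ← mul_smul, inr_mul_inl])
  refine ⟨h, hh, fun a u => ?_, fun m u => ?_⟩
  · have := ht.addHom_ext_s19 (h₁ := h.comp (DistribSMul.toAddMonoidHom MN a))
      (h₂ := (DistribSMul.toAddMonoidHom V (inl a : Λ)).comp h) fun m x => by
        simp only [AddMonoidHom.comp_apply, DistribSMul.toAddMonoidHom_apply, ← ht.2.2.2.1, hh,
          ← mul_smul, inl_mul_inr]
    exact DFunLike.congr_fun this u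
  · have := ht.addHom_ext_s19 (h₁ := (DistribSMul.toAddMonoidHom V (inr m : Λ)).comp h)
      (h₂ := 0) fun m' x => by
        simp only [AddMonoidHom.comp_apply, DistribSMul.toAddMonoidHom_apply, hh, ← mul_smul,
          inr_mul_inr, zero_smul, AddMonoidHom.zero_apply]
    exact DFunLike.congr_fun this u

variable [Module (TrivSqZeroExt A M) (N × MN)]

theorem inl_smul (ht : IsTensorProd A M N MN t) (hT : IsTrivSqZeroExtModule A M t)
    (a : A) (w : N × MN) : (inl a : Λ) • w = (a • w.1, a • w.2) := by
  rw [hT]; simp [ht.map_zero_left]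

theorem inr_smul (hT : IsTrivSqZeroExtModule A M t) (m : M) (w : N × MN) :
    (inr m : Λ) • w = (0, t m w.1) := by
  rw [hT]; simp

theorem eq_top_of_forall_exists_mem (ht : IsTensorProd A M N MN t)
    (hT : IsTrivSqZeroExtModule A M t) {S : Submodule Λ (N × MN)}
    (hS : ∀ x, ∃ u, (x, u) ∈ S) : S = ⊤ := by
  have hsnd : S.toAddSubgroup.comap (AddMonoidHom.inr N MN) = ⊤ :=
    ht.addSubgroup_eq_top fun m x => by
      obtain ⟨u, hu⟩ := hS x
      simpa [inr_smul hT] using S.smul_mem (inr m) hu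
  rw [eq_top_iff]
  rintro ⟨x, u⟩ -
  obtain ⟨u', hu'⟩ := hS x
  have hdiff : u - u' ∈ S.toAddSubgroup.comap (AddMonoidHom.inr N MN) := hsnd ▸ trivial
  simpa using S.add_mem hu' hdiff

theorem linearMap_ext_s19 (ht : IsTensorProd A M N MN t) (hT : IsTrivSqZeroExtModule A M t)
    {V : Type} [AddCommGroup V] [Module Λ V] {Ψ₁ Ψ₂ : (N × MN) →ₗ[Λ] V}
    (h : ∀ x, Ψ₁ (x, 0) = Ψ₂ (x, 0)) : Ψ₁ = Ψ₂ :=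
  eqLocus_eq_top.mp (ht.eq_top_of_forall_exists_mem hT fun x => ⟨0, h x⟩)

/-- The universal property of `T(N) = Λ ⊗_A N`. -/
theorem exists_linearMap_extend (ht : IsTensorProd A M N MN t)
    (hT : IsTrivSqZeroExtModule A M t) {V : Type} [AddCommGroup V] [Module Λ V] (ψ : N →+ V)
    (hψ : ∀ (a : A) x, ψ (a • x) = (inl a : Λ) • ψ x) :
    ∃ Ψ : (N × MN) →ₗ[Λ] V, ∀ x, Ψ (x, 0) = ψ x := by
  obtain ⟨h, hh, h_inl, h_inr⟩ := ht.exists_addHom_extend ψ hψ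
  refine ⟨{ toFun := fun w => ψ w.1 + h w.2
            map_add' := fun w w' => by simp only [Prod.fst_add, Prod.snd_add, map_add]; abel
            map_smul' := fun q w => ?_ }, fun x => by simp⟩
  conv_rhs => rw [RingHom.id_apply, ← inl_fst_add_inr_snd_eq q]
  rw [hT, add_smul, smul_add, smul_add, h_inr, add_zero]
  simp only [map_add, hψ, h_inl, hh]
  abel

theorem projective (ht : IsTensorProd A M N MN t) (hT : IsTrivSqZeroExtModule A M t)
    [Module.Projective A N] : Module.Projective Λ (N × MN) := by
  obtain ⟨s, hs⟩ := Module.projective_def'.mp ‹Module.Projective A N›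
  let ι : (N →₀ A) →+ (N →₀ Λ) := Finsupp.mapRange.addMonoidHom (inlHom A M).toAddMonoidHom
  let g : (N →₀ Λ) →ₗ[Λ] N × MN := Finsupp.linearCombination Λ fun x => (x, 0)
  have hgι : ∀ v, g (ι v) = (Finsupp.linearCombination A id v, 0) := by
    intro v
    induction v using Finsupp.induction_linear with
    | zero => simp only [map_zero, Prod.mk_zero_zero]
    | add v v' hv hv' => simp only [map_add, hv, hv', Prod.mk_add_mk, add_zero]
    | single x a => simp [ι, g, ht.inl_smul hT]
  obtain ⟨Ψ, hΨ⟩ := ht.exists_linearMap_extend hT (ι.comp s.toAddMonoidHom) fun a x => by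
    refine Finsupp.ext fun y => ?_
    simp [ι, inl_mul]
  have hsplit : g ∘ₗ Ψ = LinearMap.id := ht.linearMap_ext_s19 hT fun x => by
    simp only [LinearMap.comp_apply, hΨ, AddMonoidHom.comp_apply, LinearMap.toAddMonoidHom_coe,
      hgι, LinearMap.id_apply]
    rw [← LinearMap.comp_apply, hs, LinearMap.id_apply]
  exact Module.Projective.of_split Ψ g hsplit

theorem isSuperfluous_ker (ht : IsTensorProd A M N MN t) (hT : IsTrivSqZeroExtModule A M t)
    {N' V : Type} [AddCommGroup N'] [Module A N'] [AddCommGroup V]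
    [Module (TrivSqZeroExt A M) V] {g : N →ₗ[A] N'} (hg : (ker g).IsSuperfluous)
    {Tg : (N × MN) →ₗ[TrivSqZeroExt A M] V} (hTg : ∀ w, Tg w = 0 → g w.1 = 0) :
    (ker Tg).IsSuperfluous := by
  intro S hS
  let S₁ : Submodule A N :=
    { carrier := {x | ∃ u, (x, u) ∈ S}
      add_mem' := fun ⟨u, hu⟩ ⟨u', hu'⟩ => ⟨u + u', S.add_mem hu hu'⟩
      zero_mem' := ⟨0, S.zero_mem⟩
      smul_mem' := fun a x ⟨u, hu⟩ =>
        ⟨a • u, by simpa [ht.inl_smul hT] using S.smul_mem (inl a) hu⟩ }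
  have hS₁ : S₁ = ⊤ := hg S₁ <| eq_top_iff.mpr fun x _ => by
    have hx : (x, 0) ∈ S ⊔ ker Tg := hS ▸ Submodule.mem_top
    obtain ⟨s, hs, k, hk, hsk⟩ := Submodule.mem_sup.mp hx
    exact Submodule.mem_sup.mpr ⟨s.1, ⟨s.2, hs⟩, k.1, hTg k hk, congrArg Prod.fst hsk⟩
  exact ht.eq_top_of_forall_exists_mem hT fun x => (hS₁ ▸ Submodule.mem_top : x ∈ S₁)

end TrivSqZeroExtModule

end IsTensorProd

theorem T_minimal_projective_presentation_general
    (A M : Type) [Ring A]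
    [AddCommGroup M] [Module A M] [Module Aᵐᵒᵖ M] [SMulCommClass A Aᵐᵒᵖ M]
    (X P Q : Type)
    [AddCommGroup X] [Module A X]
    [AddCommGroup P] [Module A P]
    [AddCommGroup Q] [Module A Q]
    -- realizations of the tensor products M ⊗ X, M ⊗ P, M ⊗ Q
    (MX MP MQ : Type)
    [AddCommGroup MX] [Module A MX] [AddCommGroup MP] [Module A MP]
    [AddCommGroup MQ] [Module A MQ]
    (tX : M → X → MX) (htX : IsTensorProd A M X MX tX)
    (tP : M → P → MP) (htP : IsTensorProd A M P MP tP)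
    (tQ : M → Q → MQ) (htQ : IsTensorProd A M Q MQ tQ)
    -- the trivial extension module structures T(X), T(P), T(Q)
    [instTX : Module (TrivSqZeroExt A M) (X × MX)]
    [instTP : Module (TrivSqZeroExt A M) (P × MP)]
    (hTP : ∀ (q : TrivSqZeroExt A M) (x : P × MP),
      q • x = (q.fst • x.1, q.fst • x.2 + tP q.snd x.1))
    [instTQ : Module (TrivSqZeroExt A M) (Q × MQ)]
    (hTQ : ∀ (q : TrivSqZeroExt A M) (x : Q × MQ),
      q • x = (q.fst • x.1, q.fst • x.2 + tQ q.snd x.1))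
    -- a minimal projective presentation Q → P → X → 0 of X
    (f : Q →ₗ[A] P) (p : P →ₗ[A] X)
    (hPproj : Module.Projective A P) (hQproj : Module.Projective A Q)
    (hpsurj : Surjective p)
    (hpmin : ∀ S : Submodule A P, S ⊔ ker p = ⊤ → S = ⊤)
    (hexact : range f = ker p)
    (hfmin : ∀ S : Submodule A Q, S ⊔ ker f = ⊤ → S = ⊤)
    -- the maps T(f) = f ⊕ (id_M ⊗ f) and T(p) = p ⊕ (id_M ⊗ p)
    (Ff : MQ →+ MP) (hFf : ∀ m q, Ff (tQ m q) = tP m (f q))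
    (Fp : MP →+ MX) (hFp : ∀ m x, Fp (tP m x) = tX m (p x))
    (Tf : (Q × MQ) →ₗ[TrivSqZeroExt A M] (P × MP))
    (hTf : ∀ x : Q × MQ, Tf x = (f x.1, Ff x.2))
    (Tp : (P × MP) →ₗ[TrivSqZeroExt A M] (X × MX))
    (hTp : ∀ x : P × MP, Tp x = (p x.1, Fp x.2)) :
    Module.Projective (TrivSqZeroExt A M) (P × MP) ∧
    Module.Projective (TrivSqZeroExt A M) (Q × MQ) ∧
    Surjective Tp ∧
    (∀ S : Submodule (TrivSqZeroExt A M) (P × MP), S ⊔ ker Tp = ⊤ → S = ⊤) ∧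
    range Tf = ker Tp ∧
    (∀ S : Submodule (TrivSqZeroExt A M) (Q × MQ), S ⊔ ker Tf = ⊤ → S = ⊤) := by
  have hTf' : ⇑Tf = Prod.map f Ff := funext hTf
  have hTp' : ⇑Tp = Prod.map p Fp := funext hTp
  have hpf : p ∘ₗ f = 0 := range_le_ker_iff.mp hexact.le
  have hFexact : Ff.range = Fp.ker := le_antisymm
    (htQ.range_map_le_ker_map htX hpf hFf hFp) (htP.ker_map_le_range_map htX hpsurj hexact hFf hFp)
  refine ⟨htP.projective hTP, htQ.projective hTQ, ?_, ?_, ?_, ?_⟩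
  · rw [hTp']
    exact hpsurj.prodMap (htX.map_surjective hpsurj hFp)
  · exact htP.isSuperfluous_ker hTP hpmin fun w hw => by simpa [hTp] using congrArg Prod.fst hw
  · refine range_eq_ker_of_eq_prodMap hTf' hTp' (fun y => ?_) (fun u => ?_)
    · rw [← LinearMap.mem_ker, ← hexact]; rfl
    · rw [← AddMonoidHom.mem_ker, ← hFexact]; rfl
  · exact htQ.isSuperfluous_ker hTQ hfmin fun w hw => by simpa [hTf] using congrArg Prod.fst hw

/-- Let `A` be a finite dimensional algebra, `M` a finite
dimensional `A`-bimodule, `Λ = A ⋉ M`. If `Q → P → X → 0` is a minimal projective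
presentation of a finite dimensional `A`-module `X` (i.e. `P → X` and
`Q → ker(P → X)` are projective covers: surjections from projectives with
superfluous kernels), then `T(Q) → T(P) → T(X) → 0` is a minimal projective
presentation of the `Λ`-module `T(X)`. Here `T(N) = N × MN` with
`(r,m) • (n,u) = (r•n, r•u + t m n)` for a realization `(MN, t)` of `M ⊗_A N`,
and `T(g) = g ⊕ (id_M ⊗ g)`. -/
theorem T_minimal_projective_presentation
    (K A M : Type) [Field K] [Ring A] [Algebra K A] [FiniteDimensional K A]
    [AddCommGroup M] [Module A M] [Module Aᵐᵒᵖ M] [SMulCommClass A Aᵐᵒᵖ M]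
    [Module K M] [FiniteDimensional K M]
    (X P Q : Type)
    [AddCommGroup X] [Module A X] [Module K X] [IsScalarTower K A X] [FiniteDimensional K X]
    [AddCommGroup P] [Module A P] [Module K P] [IsScalarTower K A P] [FiniteDimensional K P]
    [AddCommGroup Q] [Module A Q] [Module K Q] [IsScalarTower K A Q] [FiniteDimensional K Q]
    -- realizations of the tensor products M ⊗ X, M ⊗ P, M ⊗ Q
    (MX MP MQ : Type)
    [AddCommGroup MX] [Module A MX] [AddCommGroup MP] [Module A MP]
    [AddCommGroup MQ] [Module A MQ]
    (tX : M → X → MX) (htX : IsTensorProd A M X MX tX)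
    (tP : M → P → MP) (htP : IsTensorProd A M P MP tP)
    (tQ : M → Q → MQ) (htQ : IsTensorProd A M Q MQ tQ)
    -- the trivial extension module structures T(X), T(P), T(Q)
    [instTX : Module (TrivSqZeroExt A M) (X × MX)]
    (hTX : ∀ (q : TrivSqZeroExt A M) (x : X × MX),
      q • x = (q.fst • x.1, q.fst • x.2 + tX q.snd x.1))
    [instTP : Module (TrivSqZeroExt A M) (P × MP)]
    (hTP : ∀ (q : TrivSqZeroExt A M) (x : P × MP),
      q • x = (q.fst • x.1, q.fst • x.2 + tP q.snd x.1))
    [instTQ : Module (TrivSqZeroExt A M) (Q × MQ)]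
    (hTQ : ∀ (q : TrivSqZeroExt A M) (x : Q × MQ),
      q • x = (q.fst • x.1, q.fst • x.2 + tQ q.snd x.1))
    -- a minimal projective presentation Q → P → X → 0 of X
    (f : Q →ₗ[A] P) (p : P →ₗ[A] X)
    (hPproj : Module.Projective A P) (hQproj : Module.Projective A Q)
    (hpsurj : Surjective p)
    (hpmin : ∀ S : Submodule A P, S ⊔ ker p = ⊤ → S = ⊤)
    (hexact : range f = ker p)
    (hfmin : ∀ S : Submodule A Q, S ⊔ ker f = ⊤ → S = ⊤)
    -- the maps T(f) = f ⊕ (id_M ⊗ f) and T(p) = p ⊕ (id_M ⊗ p)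
    (Ff : MQ →+ MP) (hFf : ∀ m q, Ff (tQ m q) = tP m (f q))
    (Fp : MP →+ MX) (hFp : ∀ m x, Fp (tP m x) = tX m (p x))
    (Tf : (Q × MQ) →ₗ[TrivSqZeroExt A M] (P × MP))
    (hTf : ∀ x : Q × MQ, Tf x = (f x.1, Ff x.2))
    (Tp : (P × MP) →ₗ[TrivSqZeroExt A M] (X × MX))
    (hTp : ∀ x : P × MP, Tp x = (p x.1, Fp x.2)) :
    Module.Projective (TrivSqZeroExt A M) (P × MP) ∧
    Module.Projective (TrivSqZeroExt A M) (Q × MQ) ∧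
    Surjective Tp ∧
    (∀ S : Submodule (TrivSqZeroExt A M) (P × MP), S ⊔ ker Tp = ⊤ → S = ⊤) ∧
    range Tf = ker Tp ∧
    (∀ S : Submodule (TrivSqZeroExt A M) (Q × MQ), S ⊔ ker Tf = ⊤ → S = ⊤) :=
  T_minimal_projective_presentation_general A M X P Q MX MP MQ tX htX tP htP tQ htQ
    (instTX := instTX) (instTP := instTP) hTP (instTQ := instTQ) hTQ f p hPproj hQproj hpsurj hpmin
    hexact hfmin Ff hFf Fp hFp Tf hTf Tp hTp
end
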